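/- arXiv:2406.04258 — 3 statements merged into one kernel-verified Lean document; each statement's English description precedes it below -/
import Mathlib

section
/- Let n ≥ 1 and let S ⊆ {1,…,n} range over subsets. Then for distinct nonzero complex numbers y₁,…,y_n, the rational-function identity ∑_{|J|=r} ∏_{α∈J, β∉J} (1 − y_β/y_α)^{-1} = 1 holds for every 0 ≤ r ≤ n; equivalently ∑_{|J|=r} ∏_{α∈J,β∉J} y_α/(y_α − y_β) = 1. -/
open Finset

/-!
Write `W J = ∏_{α ∈ J, β ∉ J} y_α / (y_α - y_β)` and `A r = ∑_{|J| = r} W J`, so `A 0 = 1`.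
Two Lagrange identities, `∑_i ∏_{j ≠ i} v_i / (v_i - v_j) = 1` (the coefficient of `X^(m-1)` in
the interpolation of `X^(m-1)` at `m` nodes) and `∑_i ∏_{j ≠ i} v_j / (v_j - v_i) = 1` (the value
at `0` of the sum of the Lagrange basis), give `A (r + 1) = A r` for `r < n`. Multiply `W J`,
`|J| = r + 1`, by the second identity over `J`: the term indexed by `α ∈ J` is
`W (J \ α) · ∏_{β ∉ J} y_α / (y_α - y_β)`. Grouping the pairs `(J \ α, α)` by `J' = J \ α`
leaves `W J'` times the first identity over the complement of `J'`.
-/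

namespace Lagrange

variable {F ι : Type*} [Field F] [DecidableEq ι] {s : Finset ι} {v : ι → F}

theorem sum_prod_div_sub_left_eq_one (hvs : Set.InjOn v s) (hs : s.Nonempty) :
    ∑ i ∈ s, ∏ j ∈ s.erase i, v i / (v i - v j) = 1 := by
  have hdeg : (Polynomial.X ^ (#s - 1) : Polynomial F).degree < #s := by
    rw [Polynomial.degree_X_pow]
    exact_mod_cast Nat.sub_lt hs.card_pos one_pos
  have hcoeff := coeff_eq_sum hvs hdeg
  rw [Polynomial.coeff_X_pow_self] at hcoeff
  rw [hcoeff]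
  refine sum_congr rfl fun i hi => ?_
  rw [prod_div_distrib, prod_const, card_erase_of_mem hi, Polynomial.eval_X_pow]

theorem sum_prod_div_sub_right_eq_one (hvs : Set.InjOn v s) (hs : s.Nonempty) :
    ∑ i ∈ s, ∏ j ∈ s.erase i, v j / (v j - v i) = 1 := by
  have heval := congrArg (Polynomial.eval 0) (sum_basis hvs hs)
  rw [Polynomial.eval_finsetSum, Polynomial.eval_one] at heval
  rw [← heval]
  refine sum_congr rfl fun i _ => ?_
  rw [Lagrange.basis, Polynomial.eval_prod]
  refine prod_congr rfl fun j _ => ?_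
  rw [basisDivisor, Polynomial.eval_mul, Polynomial.eval_C, Polynomial.eval_sub,
    Polynomial.eval_X, Polynomial.eval_C, ← neg_sub (v j) (v i), inv_neg]
  ring

end Lagrange

theorem Finset.sum_powersetCard_succ_sum_erase {ι M : Type*} [DecidableEq ι] [AddCommMonoid M]
    (s : Finset ι) (r : ℕ) (f : Finset ι → ι → M) :
    ∑ J ∈ powersetCard (r + 1) s, ∑ α ∈ J, f (J.erase α) α =
      ∑ J ∈ powersetCard r s, ∑ α ∈ s \ J, f J α := by
  rw [sum_sigma', sum_sigma']
  refine sum_nbij' (fun p => ⟨p.1.erase p.2, p.2⟩) (fun p => ⟨insert p.2 p.1, p.2⟩)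
    ?_ ?_ ?_ ?_ fun _ _ => rfl
  · rintro ⟨J, α⟩ h
    simp only [mem_sigma, mem_powersetCard] at h ⊢
    obtain ⟨⟨hJs, hJ⟩, hα⟩ := h
    refine ⟨⟨(erase_subset α J).trans hJs, by rw [card_erase_of_mem hα, hJ]; rfl⟩, ?_⟩
    exact mem_sdiff.2 ⟨hJs hα, notMem_erase α J⟩
  · rintro ⟨J, α⟩ h
    simp only [mem_sigma, mem_powersetCard, mem_sdiff] at h ⊢
    obtain ⟨⟨hJs, hJ⟩, hαs, hα⟩ := h
    exact ⟨⟨insert_subset hαs hJs, by rw [card_insert_of_notMem hα, hJ]⟩, mem_insert_self α J⟩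
  · rintro ⟨J, α⟩ h
    simp [insert_erase (mem_sigma.1 h).2]
  · rintro ⟨J, α⟩ h
    simp [erase_insert (mem_sdiff.1 (mem_sigma.1 h).2).2]

section SplitWeight

variable {F ι : Type*} [Field F] [Fintype ι] [DecidableEq ι] (y : ι → F)

def splitWeight (J : Finset ι) : F :=
  ∏ α ∈ J, ∏ β ∈ Jᶜ, y α / (y α - y β)

theorem splitWeight_mul_prod_erase {J : Finset ι} {α : ι} (hα : α ∈ J) :
    splitWeight y J * ∏ γ ∈ J.erase α, y γ / (y γ - y α) =
      splitWeight y (J.erase α) * ∏ β ∈ (J.erase α)ᶜ.erase α, y α / (y α - y β) := by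
  have hα' : α ∉ Jᶜ := notMem_compl.2 hα
  rw [compl_erase, erase_insert hα', splitWeight, splitWeight, compl_erase,
    ← mul_prod_erase J _ hα]
  simp only [prod_insert hα', prod_mul_distrib]
  ring

variable {y}

theorem sum_powersetCard_succ_splitWeight (hy : Function.Injective y) {r : ℕ}
    (hr : r < Fintype.card ι) :
    ∑ J ∈ powersetCard (r + 1) univ, splitWeight y J =
      ∑ J ∈ powersetCard r univ, splitWeight y J := calc
  _ = ∑ J ∈ powersetCard (r + 1) univ, ∑ α ∈ J,
        splitWeight y J * ∏ γ ∈ J.erase α, y γ / (y γ - y α) := by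
    refine sum_congr rfl fun J hJ => ?_
    have hJ : J.Nonempty := card_pos.1 <| by rw [(mem_powersetCard.1 hJ).2]; omega
    rw [← mul_sum, Lagrange.sum_prod_div_sub_right_eq_one hy.injOn hJ, mul_one]
  _ = ∑ J ∈ powersetCard (r + 1) univ, ∑ α ∈ J,
        splitWeight y (J.erase α) * ∏ β ∈ (J.erase α)ᶜ.erase α, y α / (y α - y β) :=
    sum_congr rfl fun J _ => sum_congr rfl fun α hα => splitWeight_mul_prod_erase y hα
  _ = ∑ J ∈ powersetCard r univ, ∑ α ∈ Jᶜ,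
        splitWeight y J * ∏ β ∈ Jᶜ.erase α, y α / (y α - y β) :=
    sum_powersetCard_succ_sum_erase univ r fun J α =>
      splitWeight y J * ∏ β ∈ Jᶜ.erase α, y α / (y α - y β)
  _ = ∑ J ∈ powersetCard r univ, splitWeight y J := by
    refine sum_congr rfl fun J hJ => ?_
    have hJ : Jᶜ.Nonempty := card_pos.1 <| by
      rw [card_compl, (mem_powersetCard.1 hJ).2]; omega
    rw [← mul_sum, Lagrange.sum_prod_div_sub_left_eq_one hy.injOn hJ, mul_one]

theorem sum_powersetCard_splitWeight (hy : Function.Injective y) {r : ℕ}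
    (hr : r ≤ Fintype.card ι) :
    ∑ J ∈ powersetCard r univ, splitWeight y J = 1 := by
  induction r with
  | zero => simp [splitWeight]
  | succ r ih => rw [sum_powersetCard_succ_splitWeight hy hr, ih (Nat.le_of_succ_le hr)]

end SplitWeight

theorem monopole_partial_fraction_identity_general (n : ℕ) (y : Fin n → ℂ)
    (hyinj : Function.Injective y) (r : ℕ) (hr : r ≤ n) :
    ∑ J ∈ powersetCard r (univ : Finset (Fin n)),
      ∏ α ∈ J, ∏ β ∈ univ \ J, y α / (y α - y β) = 1 := by
  simpa [splitWeight, compl_eq_univ_sdiff] using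
    sum_powersetCard_splitWeight hyinj (hr.trans_eq (Fintype.card_fin n).symm)

/-- For pairwise distinct nonzero `y₁, …, y_n` and any `0 ≤ r ≤ n`,
`∑_{|J| = r} ∏_{α ∈ J, β ∉ J} y_α/(y_α − y_β) = 1`
(equivalently `∑_{|J|=r} ∏ (1 − y_β/y_α)^{-1} = 1`). -/
theorem monopole_partial_fraction_identity (n : ℕ) (hn : 1 ≤ n) (y : Fin n → ℂ)
    (hy0 : ∀ i, y i ≠ 0) (hyinj : Function.Injective y) (r : ℕ) (hr : r ≤ n) :
    ∑ J ∈ powersetCard r (univ : Finset (Fin n)),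
      ∏ α ∈ J, ∏ β ∈ univ \ J, y α / (y α - y β) = 1 :=
  monopole_partial_fraction_identity_general n y hyinj r hr
end

section
/- Let y₁,…,y_d be pairwise distinct nonzero complex numbers and let e_p denote the p-th elementary symmetric polynomial. Then for 0 ≤ p ≤ r ≤ d, the expression ∑_{J ⊆ {1,…,d}, |J| = r} e_p({y_j}_{j∈J}) · ∏_{α∈J, β∉J} (1 − y_β/y_α)^{-1} is a symmetric polynomial in y₁,…,y_d (i.e. the apparent denominators cancel); in particular for r = d it equals e_p(y₁,…,y_d). -/
/-!
Put `W_S(J) = ∏_{a ∈ J, b ∈ S \ J} y_a / (y_a - y_b)`, which for nonzero `y` is the product of the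
`(1 - y_β / y_α)⁻¹`. For `r ≤ |S|` the polynomial `∑_{|J| = r} W_S(J) ∏_{a ∈ J} (X + y_a)` equals
`∑_{p ≤ r} e_p(S) X^{r-p}`, and comparing coefficients of `X^{r-p}` gives the theorem with the
symmetric polynomial `e_p`.

For `r = |S|` this is Vieta's formula. For `r < |S|` both sides have degree `≤ r`, so it suffices
to compare them at the `|S|` distinct points `-y_c`, `c ∈ S`. There the left side only sees the
`J ∌ c`, for which `W_S(J) ∏_{a ∈ J} (y_a - y_c) = W_{S∖c}(J) ∏_{a ∈ J} y_a`: it is the left side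
for `S ∖ c` at `0`. Since `e_p(S) = e_p(S∖c) + y_c e_{p-1}(S∖c)`, the right side telescopes to
`e_r(S∖c)`, its own value for `S ∖ c` at `0`. Induction on `S` concludes.
-/

open Finset Polynomial

theorem Multiset.esymm_zero {R : Type*} [CommSemiring R] (s : Multiset R) : s.esymm 0 = 1 := by
  simp [Multiset.esymm]

theorem Multiset.esymm_cons_succ {R : Type*} [CommSemiring R] (a : R) (s : Multiset R) (p : ℕ) :
    (a ::ₘ s).esymm (p + 1) = s.esymm (p + 1) + a * s.esymm p := by
  simp only [Multiset.esymm, Multiset.powersetCard_cons, Multiset.map_add, Multiset.sum_add,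
    Multiset.map_map, Function.comp_def, Multiset.prod_cons, Multiset.sum_map_mul_left]

namespace Grassmannian

variable {K ι : Type*} [Field K]

noncomputable def esymmTrunc (y : ι → K) (S : Finset ι) (r : ℕ) : K[X] :=
  ∑ p ∈ range (r + 1), C ((S.val.map y).esymm p) * X ^ (r - p)

noncomputable def weight [DecidableEq ι] (y : ι → K) (S J : Finset ι) : K :=
  ∏ a ∈ J, ∏ b ∈ S \ J, y a / (y a - y b)

noncomputable def weightedSum [DecidableEq ι] (y : ι → K) (S : Finset ι) (r : ℕ) : K[X] :=
  ∑ J ∈ S.powersetCard r, C (weight y S J) * ∏ a ∈ J, (X + C (y a))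

variable {y : ι → K}

section esymmTrunc

theorem natDegree_esymmTrunc_le (S : Finset ι) (r : ℕ) : (esymmTrunc y S r).natDegree ≤ r :=
  natDegree_sum_le_of_forall_le _ _ fun _ _ => (natDegree_C_mul_X_pow_le _ _).trans (Nat.sub_le _ _)

theorem coeff_esymmTrunc (S : Finset ι) {p r : ℕ} (hp : p ≤ r) :
    (esymmTrunc y S r).coeff (r - p) = (S.val.map y).esymm p := by
  rw [esymmTrunc, finsetSum_coeff, sum_eq_single_of_mem p (mem_range.2 (by omega))]
  · simp
  · intro q hq hqp
    rw [coeff_C_mul_X_pow, if_neg (by have := mem_range.1 hq; omega)]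

theorem esymmTrunc_succ (S : Finset ι) (r : ℕ) :
    esymmTrunc y S (r + 1) = X * esymmTrunc y S r + C ((S.val.map y).esymm (r + 1)) := by
  rw [esymmTrunc, sum_range_succ, esymmTrunc, mul_sum, Nat.sub_self, pow_zero, mul_one]
  congr 1
  refine sum_congr rfl fun p hp => ?_
  rw [show r + 1 - p = r - p + 1 by have := mem_range.1 hp; omega, pow_succ]
  ring

theorem esymmTrunc_insert [DecidableEq ι] {c : ι} {T : Finset ι} (hc : c ∉ T) (r : ℕ) :
    esymmTrunc y (insert c T) (r + 1) = esymmTrunc y T (r + 1) + C (y c) * esymmTrunc y T r := by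
  simp only [esymmTrunc, insert_val_of_notMem hc, Multiset.map_cons]
  rw [sum_range_succ', sum_range_succ' _ (r + 1)]
  simp only [Multiset.esymm_cons_succ, Multiset.esymm_zero, Nat.add_sub_add_right, map_add,
    map_mul, add_mul, sum_add_distrib, mul_sum, mul_assoc]
  ring

theorem eval_neg_esymmTrunc_insert [DecidableEq ι] {c : ι} {T : Finset ι} (hc : c ∉ T) (r : ℕ) :
    (esymmTrunc y (insert c T) r).eval (-y c) = (esymmTrunc y T r).eval 0 := by
  cases r with
  | zero => simp [esymmTrunc, Multiset.esymm_zero]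
  | succ r =>
    rw [esymmTrunc_insert hc, esymmTrunc_succ]
    simp only [eval_add, eval_mul, eval_X, eval_C]
    ring

end esymmTrunc

variable [DecidableEq ι]

theorem weight_self (S : Finset ι) : weight y S S = 1 := by
  simp [weight]

theorem weight_insert {c : ι} {T J : Finset ι} (hc : c ∉ T) (hJ : J ⊆ T) :
    weight y (insert c T) J = weight y T J * ∏ a ∈ J, y a / (y a - y c) := by
  rw [weight, weight, ← prod_mul_distrib]
  refine prod_congr rfl fun a _ => ?_
  rw [insert_sdiff_of_notMem _ (fun h => hc (hJ h)), prod_insert (fun h => hc (mem_sdiff.1 h).1),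
    mul_comm]

theorem weight_eq_prod_inv_one_sub_div (S : Finset ι) {J : Finset ι} (hy : ∀ a ∈ J, y a ≠ 0) :
    weight y S J = ∏ α ∈ J, ∏ β ∈ S \ J, (1 - y β / y α)⁻¹ :=
  prod_congr rfl fun α hα => prod_congr rfl fun β _ => by rw [one_sub_div (hy α hα), inv_div]

theorem natDegree_weightedSum_le (S : Finset ι) (r : ℕ) : (weightedSum y S r).natDegree ≤ r := by
  refine natDegree_sum_le_of_forall_le _ _ fun J hJ => (natDegree_C_mul_le _ _).trans ?_
  rw [natDegree_prod_of_monic _ _ fun a _ => monic_X_add_C _]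
  simp [(mem_powersetCard.1 hJ).2]

theorem coeff_weightedSum (S : Finset ι) {p r : ℕ} (hp : p ≤ r) :
    (weightedSum y S r).coeff (r - p) =
      ∑ J ∈ S.powersetCard r, weight y S J * (J.val.map y).esymm p := by
  rw [weightedSum, finsetSum_coeff]
  refine sum_congr rfl fun J hJ => ?_
  have hJr := (mem_powersetCard.1 hJ).2
  rw [coeff_C_mul, prod_X_add_C_coeff _ _ (by omega), hJr, Nat.sub_sub_self hp,
    Finset.esymm_map_val]

theorem weightedSum_self (S : Finset ι) : weightedSum y S #S = esymmTrunc y S #S := by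
  rw [weightedSum, powersetCard_self, sum_singleton, weight_self, C_1, one_mul, esymmTrunc]
  simpa [Multiset.map_map, Function.comp_def] using
    Multiset.prod_X_add_C_eq_sum_esymm (S.val.map y)

theorem eval_neg_weightedSum_insert {c : ι} {T : Finset ι} (hc : c ∉ T)
    (hy : Set.InjOn y (insert c T : Finset ι)) (r : ℕ) :
    (weightedSum y (insert c T) r).eval (-y c) = (weightedSum y T r).eval 0 := by
  have hvanish : ∀ J ∈ (insert c T).powersetCard r, J ∉ T.powersetCard r →
      weight y (insert c T) J * ∏ a ∈ J, (-y c + y a) = 0 := by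
    intro J hJ hJT
    rw [mem_powersetCard] at hJ hJT
    have hcJ : c ∈ J := by_contra fun hcJ => hJT ⟨(subset_insert_iff_of_notMem hcJ).1 hJ.1, hJ.2⟩
    rw [prod_eq_zero hcJ (neg_add_cancel _), mul_zero]
  have hcancel : ∀ J ∈ T.powersetCard r,
      weight y (insert c T) J * ∏ a ∈ J, (-y c + y a) = weight y T J * ∏ a ∈ J, (0 + y a) := by
    intro J hJ
    have hJT := (mem_powersetCard.1 hJ).1
    rw [weight_insert hc hJT, mul_assoc, ← prod_mul_distrib]
    congr 1
    refine prod_congr rfl fun a ha => ?_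
    have hac : y a - y c ≠ 0 := sub_ne_zero.2 fun h =>
      hc (hy (by simp [hJT ha]) (mem_insert_self c T) h ▸ hJT ha)
    rw [neg_add_eq_sub, div_mul_cancel₀ _ hac, zero_add]
  simp only [weightedSum, eval_finsetSum, eval_mul, eval_C, eval_prod, eval_add, eval_X]
  rw [← sum_subset (powersetCard_mono (subset_insert c T)) hvanish, sum_congr rfl hcancel]

theorem weightedSum_eq_esymmTrunc {S : Finset ι} (hy : Set.InjOn y S) {r : ℕ} (hr : r ≤ #S) :
    weightedSum y S r = esymmTrunc y S r := by
  induction S using Finset.strongInduction with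
  | H S ih =>
    rcases hr.eq_or_lt with rfl | hr
    · exact weightedSum_self S
    refine eq_of_degrees_lt_of_eval_index_eq (v := fun i => -y i) S (neg_injective.comp_injOn hy)
      ((degree_le_of_natDegree_le (natDegree_weightedSum_le S r)).trans_lt (by exact_mod_cast hr))
      ((degree_le_of_natDegree_le (natDegree_esymmTrunc_le S r)).trans_lt (by exact_mod_cast hr))
      fun c hc => ?_
    have hcS : c ∉ S.erase c := notMem_erase c S
    rw [← insert_erase hc] at hy ⊢
    rw [eval_neg_weightedSum_insert hcS hy, eval_neg_esymmTrunc_insert hcS,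
      ih _ (erase_ssubset hc) (hy.mono (subset_insert _ _)) (by rw [card_erase_of_mem hc]; omega)]

theorem sum_weight_mul_esymm {S : Finset ι} (hy : Set.InjOn y S) {p r : ℕ} (hp : p ≤ r)
    (hr : r ≤ #S) :
    ∑ J ∈ S.powersetCard r, weight y S J * (J.val.map y).esymm p = (S.val.map y).esymm p := by
  rw [← coeff_weightedSum S hp, weightedSum_eq_esymmTrunc hy hr, coeff_esymmTrunc S hp]

end Grassmannian

/-- The `x = 1` specialization of the Finkelberg–Tsymbaliuk abelianization formula:
for `0 ≤ p ≤ r ≤ d`, the expression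
`∑_{|J| = r} e_p({y_j}_{j∈J}) · ∏_{α∈J, β∉J} (1 − y_β/y_α)^{-1}`
is given by a symmetric polynomial in `y₁,…,y_d` (the apparent denominators cancel),
and for `r = d` it equals the elementary symmetric polynomial `e_p(y₁,…,y_d)`. -/
theorem monopole_esymm_regular (d r p : ℕ) (hp : p ≤ r) (hr : r ≤ d) :
    (∃ P : MvPolynomial (Fin d) ℂ, P.IsSymmetric ∧
      ∀ y : Fin d → ℂ, (∀ i, y i ≠ 0) → Function.Injective y →
        ∑ J ∈ powersetCard r (univ : Finset (Fin d)),
          (∑ s ∈ powersetCard p J, ∏ i ∈ s, y i) *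
            ∏ α ∈ J, ∏ β ∈ univ \ J, (1 - y β / y α)⁻¹
        = MvPolynomial.eval y P) ∧
    (r = d → ∀ y : Fin d → ℂ, (∀ i, y i ≠ 0) → Function.Injective y →
      ∑ J ∈ powersetCard r (univ : Finset (Fin d)),
        (∑ s ∈ powersetCard p J, ∏ i ∈ s, y i) *
          ∏ α ∈ J, ∏ β ∈ univ \ J, (1 - y β / y α)⁻¹
      = MvPolynomial.eval y (MvPolynomial.esymm (Fin d) ℂ p)) := by
  have hsum : ∀ y : Fin d → ℂ, (∀ i, y i ≠ 0) → Function.Injective y →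
      ∑ J ∈ powersetCard r (univ : Finset (Fin d)),
        (∑ s ∈ powersetCard p J, ∏ i ∈ s, y i) *
          ∏ α ∈ J, ∏ β ∈ univ \ J, (1 - y β / y α)⁻¹
      = MvPolynomial.eval y (MvPolynomial.esymm (Fin d) ℂ p) := by
    intro y hy0 hy
    rw [MvPolynomial.esymm, map_sum]
    simp only [map_prod, MvPolynomial.eval_X, ← Finset.esymm_map_val]
    rw [← Grassmannian.sum_weight_mul_esymm hy.injOn hp (by simpa using hr)]
    refine sum_congr rfl fun J _ => ?_
    rw [Finset.esymm_map_val, mul_comm,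
      Grassmannian.weight_eq_prod_inv_one_sub_div _ fun a _ => hy0 a]
  exact ⟨⟨_, MvPolynomial.esymm_isSymmetric _ _ p, hsum⟩, fun _ => hsum⟩
end

section
/- Consider the category whose objects are finite configurations c of labeled points on S¹ and whose morphism space from c₁ to c₂ is the free ℂ-module on isotopy classes of taut strand diagrams (no bigons) on the cylinder S¹×[0,1] from c₁ to c₂, with composition defined by: the concatenation if it is taut, and 0 if the concatenation contains a bigon. Then this composition is associative. -/
/-! Taut strand diagrams on the cylinder `S¹ × [0,1]`, modelled in the universal
cover: a configuration is a tuple of labeled points on `ℝ/ℤ` (given by real lifts,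
distinct mod `ℤ`), and an isotopy-class of taut diagrams is encoded by the induced
label-preserving permutation of endpoints together with a lift to `ℝ` of each
strand's top endpoint (recording its winding), the strand being the straight line
between the lifted endpoints.  Crossing numbers are counted in the universal cover,
and a concatenation is taut iff crossing numbers add. -/

/-- A configuration of `n` labeled points on the circle `ℝ/ℤ`, given by real lifts. -/
structure Config (n : ℕ) where
  pos : Fin n → ℝ
  lbl : Fin n → ℕ
  inj : ∀ i j : Fin n, i ≠ j → ∀ m : ℤ, pos i - pos j ≠ m

/-- An isotopy class of taut strand diagrams on the cylinder from `c₁` to `c₂`. -/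
structure Diagram {n : ℕ} (c₁ c₂ : Config n) where
  perm : Equiv.Perm (Fin n)
  lblOk : ∀ i, c₂.lbl (perm i) = c₁.lbl i
  lift : Fin n → ℝ
  liftOk : ∀ i, ∃ m : ℤ, lift i - c₂.pos (perm i) = m

/-- Number of crossings of two straight strands in the cylinder, with bottom
(resp. top) endpoints differing by `x` (resp. `y`) in the universal cover:
the number of integers strictly between `x` and `y`. -/
noncomputable def crossPair (x y : ℝ) : ℕ :=
  Nat.card {m : ℤ // (x < m ∧ (m : ℝ) < y) ∨ (y < m ∧ (m : ℝ) < x)}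

/-- Total crossing number of a taut diagram. -/
noncomputable def cross {n : ℕ} {c₁ c₂ : Config n} (D : Diagram c₁ c₂) : ℕ :=
  ∑ p ∈ Finset.univ.filter (fun p : Fin n × Fin n => p.1 < p.2),
    crossPair (c₁.pos p.1 - c₁.pos p.2) (D.lift p.1 - D.lift p.2)

/-- Concatenation of diagrams (stacking `E` on top of `D`), straightened. -/
def Diagram.concat {n : ℕ} {c₁ c₂ c₃ : Config n} (D : Diagram c₁ c₂)
    (E : Diagram c₂ c₃) : Diagram c₁ c₃ where
  perm := D.perm.trans E.perm
  lblOk := fun i => by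
    rw [Equiv.trans_apply, E.lblOk, D.lblOk]
  lift := fun i => E.lift (D.perm i) + (D.lift i - c₂.pos (D.perm i))
  liftOk := fun i => by
    obtain ⟨m, hm⟩ := E.liftOk (D.perm i)
    obtain ⟨m', hm'⟩ := D.liftOk i
    exact ⟨m + m', by rw [Equiv.trans_apply]; push_cast; linarith⟩

/-- The concatenation of two taut diagrams is taut iff crossing numbers add. -/
def TautConcat {n : ℕ} {c₁ c₂ c₃ : Config n} (D : Diagram c₁ c₂)
    (E : Diagram c₂ c₃) : Prop :=
  cross (D.concat E) = cross D + cross E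

noncomputable instance {n : ℕ} {c₁ c₂ c₃ : Config n} (D : Diagram c₁ c₂) (E : Diagram c₂ c₃) :
    Decidable (TautConcat D E) := Nat.decEq _ _

/-- Composition on the free `ℂ`-modules on taut diagrams: the concatenation if it
is taut, and `0` if the concatenation contains a bigon (Eq. (nil-cat)). -/
noncomputable def nilComp {n : ℕ} {c₁ c₂ c₃ : Config n}
    (F : Diagram c₁ c₂ →₀ ℂ) (G : Diagram c₂ c₃ →₀ ℂ) : Diagram c₁ c₃ →₀ ℂ :=
  F.sum fun D a => G.sum fun E b =>
    if TautConcat D E then Finsupp.single (D.concat E) (a * b) else 0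

/-! In the universal cover a strand of a concatenation is the sum of the two strands it
is made of, so for each pair of strands the relative displacement of the composite
passes through the relative displacement at the middle level, which is never an
integer because the middle points are distinct on the circle. Counting the integers
crossed therefore gives `cross (D.concat E) ≤ cross D + cross E` pair by pair. Since
concatenation is associative, a triple concatenation is taut for one bracketing iff
`cross` of the triple is `cross D + cross E + cross H`, iff it is taut for the other.
Associativity of `nilComp` then follows by bilinearity from the case of basis vectors. -/

open Finset

section PairSums

variable {ι M : Type*} [Fintype ι] [LinearOrder ι] [AddCommMonoid M]

theorem Finset.sum_filter_lt_eq_sum_sym2 (f : ι → ι → M) (hf : ∀ i j, f i j = f j i) :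
    ∑ p ∈ univ.filter (fun p : ι × ι => p.1 < p.2), f p.1 p.2
      = ∑ z ∈ univ.sym2 with ¬ z.IsDiag, Sym2.lift ⟨f, hf⟩ z := by
  rw [sum_sym2_filter_not_isDiag]
  refine Finset.sum_congr ?_ fun _ _ => rfl
  ext p
  simp only [mem_filter, mem_univ, true_and, mem_offDiag]
  exact ⟨fun h => ⟨h.ne, h⟩, fun h => h.2⟩

theorem Finset.sum_filter_lt_comp_perm (σ : Equiv.Perm ι) (f : ι → ι → M)
    (hf : ∀ i j, f i j = f j i) :
    ∑ p ∈ univ.filter (fun p : ι × ι => p.1 < p.2), f (σ p.1) (σ p.2)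
      = ∑ p ∈ univ.filter (fun p : ι × ι => p.1 < p.2), f p.1 p.2 := by
  rw [sum_filter_lt_eq_sum_sym2 _ fun i j => hf (σ i) (σ j), sum_filter_lt_eq_sum_sym2 f hf]
  refine Finset.sum_nbij' (Sym2.map σ) (Sym2.map σ.symm) ?_ ?_ ?_ ?_ ?_ <;>
  · intro z
    induction z using Sym2.ind
    simp

end PairSums

section CrossPair

def intsBetween (x y : ℝ) : Set ℤ := {m | (x < m ∧ (m : ℝ) < y) ∨ (y < m ∧ (m : ℝ) < x)}

theorem crossPair_eq_ncard (x y : ℝ) : crossPair x y = (intsBetween x y).ncard :=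
  Nat.card_coe_set_eq _

theorem intsBetween_finite (x y : ℝ) : (intsBetween x y).Finite := by
  refine (Set.finite_Icc ⌈min x y⌉ ⌊max x y⌋).subset ?_
  rintro m (⟨h₁, h₂⟩ | ⟨h₁, h₂⟩) <;>
  · simp only [Set.mem_Icc, Int.ceil_le, Int.le_floor]
    constructor <;> linarith [min_le_left x y, min_le_right x y, le_max_left x y, le_max_right x y]

theorem crossPair_neg (x y : ℝ) : crossPair (-x) (-y) = crossPair x y :=
  Nat.card_congr <| Equiv.subtypeEquiv (Equiv.neg ℤ) fun m => by
    simp only [Equiv.neg_apply, Int.cast_neg]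
    grind

theorem crossPair_add_intCast (x y : ℝ) (k : ℤ) :
    crossPair (x + k) (y + k) = crossPair x y :=
  Nat.card_congr <| Equiv.subtypeEquiv (Equiv.addRight (-k)) fun m => by
    simp only [Equiv.coe_addRight, Int.cast_add, Int.cast_neg]
    grind

theorem crossPair_le_add (x y z : ℝ) (hy : ∀ m : ℤ, y ≠ m) :
    crossPair x z ≤ crossPair x y + crossPair y z := by
  have hsub : intsBetween x z ⊆ intsBetween x y ∪ intsBetween y z := by
    rintro m (⟨h₁, h₂⟩ | ⟨h₁, h₂⟩) <;>
    rcases (hy m).lt_or_gt with h | h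
    exacts [.inr (.inl ⟨h, h₂⟩), .inl (.inl ⟨h₁, h⟩), .inl (.inr ⟨h, h₂⟩), .inr (.inr ⟨h₁, h⟩)]
  simp only [crossPair_eq_ncard]
  exact (Set.ncard_le_ncard hsub ((intsBetween_finite x y).union (intsBetween_finite y z))).trans
    (Set.ncard_union_le _ _)

end CrossPair

section Diagrams

variable {n : ℕ} {c₁ c₂ c₃ c₄ : Config n}

@[ext]
theorem Diagram.ext {D E : Diagram c₁ c₂} (hperm : D.perm = E.perm) (hlift : D.lift = E.lift) :
    D = E := by
  cases D
  cases E
  cases hperm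
  cases hlift
  rfl

theorem Diagram.concat_assoc (D : Diagram c₁ c₂) (E : Diagram c₂ c₃) (H : Diagram c₃ c₄) :
    (D.concat E).concat H = D.concat (E.concat H) := by
  ext i
  · rfl
  · simp only [Diagram.concat, Equiv.trans_apply]
    ring

theorem cross_eq_sum_perm (D : Diagram c₁ c₂) (σ : Equiv.Perm (Fin n)) :
    cross D = ∑ p ∈ univ.filter (fun p : Fin n × Fin n => p.1 < p.2),
      crossPair (c₁.pos (σ p.1) - c₁.pos (σ p.2)) (D.lift (σ p.1) - D.lift (σ p.2)) := by
  refine (sum_filter_lt_comp_perm σ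
    (fun i j => crossPair (c₁.pos i - c₁.pos j) (D.lift i - D.lift j)) fun i j => ?_).symm
  rw [← crossPair_neg, neg_sub, neg_sub]

theorem crossPair_concat_le (D : Diagram c₁ c₂) (E : Diagram c₂ c₃) {i j : Fin n} (hij : i ≠ j) :
    crossPair (c₁.pos i - c₁.pos j) ((D.concat E).lift i - (D.concat E).lift j)
      ≤ crossPair (c₁.pos i - c₁.pos j) (D.lift i - D.lift j)
        + crossPair (c₂.pos (D.perm i) - c₂.pos (D.perm j))
            (E.lift (D.perm i) - E.lift (D.perm j)) := by
  obtain ⟨kᵢ, hkᵢ⟩ := D.liftOk i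
  obtain ⟨kⱼ, hkⱼ⟩ := D.liftOk j
  have hmid : D.lift i - D.lift j = c₂.pos (D.perm i) - c₂.pos (D.perm j) + ↑(kᵢ - kⱼ) := by
    push_cast
    linarith
  have hend : (D.concat E).lift i - (D.concat E).lift j
      = E.lift (D.perm i) - E.lift (D.perm j) + ↑(kᵢ - kⱼ) := by
    simp only [Diagram.concat]
    push_cast
    linarith
  have hmid_notInt : ∀ m : ℤ, D.lift i - D.lift j ≠ m := by
    intro m hm
    refine c₂.inj _ _ (D.perm.injective.ne hij) (m - (kᵢ - kⱼ)) ?_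
    push_cast at hm hmid ⊢
    linarith
  calc _ ≤ _ := crossPair_le_add _ _ _ hmid_notInt
    _ = _ := by rw [hend, hmid, crossPair_add_intCast]

theorem cross_concat_le (D : Diagram c₁ c₂) (E : Diagram c₂ c₃) :
    cross (D.concat E) ≤ cross D + cross E := by
  rw [cross_eq_sum_perm E D.perm, cross, cross, ← sum_add_distrib]
  exact sum_le_sum fun p hp => crossPair_concat_le D E (mem_filter.1 hp).2.ne

theorem tautConcat_concat_iff (D : Diagram c₁ c₂) (E : Diagram c₂ c₃) (H : Diagram c₃ c₄) :
    TautConcat D E ∧ TautConcat (D.concat E) H ↔ TautConcat E H ∧ TautConcat D (E.concat H) := by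
  have := cross_concat_le D E
  have := cross_concat_le E H
  have := cross_concat_le (D.concat E) H
  have := cross_concat_le D (E.concat H)
  have := congrArg cross (D.concat_assoc E H)
  unfold TautConcat
  omega

end Diagrams

section NilComp

variable {n : ℕ} {c₁ c₂ c₃ : Config n}

@[simp]
theorem nilComp_zero_left (G : Diagram c₂ c₃ →₀ ℂ) : nilComp (0 : Diagram c₁ c₂ →₀ ℂ) G = 0 :=
  Finsupp.sum_zero_index

@[simp]
theorem nilComp_zero_right (F : Diagram c₁ c₂ →₀ ℂ) : nilComp F (0 : Diagram c₂ c₃ →₀ ℂ) = 0 := by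
  simp [nilComp]

theorem nilComp_add_left (F₁ F₂ : Diagram c₁ c₂ →₀ ℂ) (G : Diagram c₂ c₃ →₀ ℂ) :
    nilComp (F₁ + F₂) G = nilComp F₁ G + nilComp F₂ G := by
  refine Finsupp.sum_add_index' (fun D => by simp) fun D a₁ a₂ => ?_
  rw [← Finsupp.sum_add]
  refine Finsupp.sum_congr fun E _ => ?_
  split_ifs <;> simp [add_mul]

theorem nilComp_add_right (F : Diagram c₁ c₂ →₀ ℂ) (G₁ G₂ : Diagram c₂ c₃ →₀ ℂ) :
    nilComp F (G₁ + G₂) = nilComp F G₁ + nilComp F G₂ := by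
  rw [nilComp, nilComp, nilComp, ← Finsupp.sum_add]
  refine Finsupp.sum_congr fun D _ => Finsupp.sum_add_index' (fun E => by simp) fun E b₁ b₂ => ?_
  split_ifs <;> simp [mul_add]

theorem nilComp_single_single (D : Diagram c₁ c₂) (E : Diagram c₂ c₃) (a b : ℂ) :
    nilComp (Finsupp.single D a) (Finsupp.single E b)
      = if TautConcat D E then Finsupp.single (D.concat E) (a * b) else 0 := by
  rw [nilComp, Finsupp.sum_single_index (by simp), Finsupp.sum_single_index (by simp)]

theorem nilComp_single_assoc {c₄ : Config n} (D : Diagram c₁ c₂) (E : Diagram c₂ c₃)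
    (L : Diagram c₃ c₄) (a b c : ℂ) :
    nilComp (nilComp (Finsupp.single D a) (Finsupp.single E b)) (Finsupp.single L c)
      = nilComp (Finsupp.single D a) (nilComp (Finsupp.single E b) (Finsupp.single L c)) := by
  have hassoc := tautConcat_concat_iff D E L
  rw [nilComp_single_single, nilComp_single_single]
  split_ifs <;>
    simp only [nilComp_single_single, nilComp_zero_left, nilComp_zero_right, Diagram.concat_assoc,
      mul_assoc] <;>
    split_ifs <;> first | rfl | tauto

end NilComp

/-- The nil composition of the strand-diagram category is associative. -/
theorem nilComp_assoc {n : ℕ} {c₁ c₂ c₃ c₄ : Config n}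
    (F : Diagram c₁ c₂ →₀ ℂ) (G : Diagram c₂ c₃ →₀ ℂ) (H : Diagram c₃ c₄ →₀ ℂ) :
    nilComp (nilComp F G) H = nilComp F (nilComp G H) := by
  induction F using Finsupp.induction_linear with
  | zero => simp
  | add F₁ F₂ h₁ h₂ => rw [nilComp_add_left, nilComp_add_left, nilComp_add_left, h₁, h₂]
  | single D a =>
    induction G using Finsupp.induction_linear with
    | zero => simp
    | add G₁ G₂ h₁ h₂ =>
      rw [nilComp_add_right, nilComp_add_left, nilComp_add_left, nilComp_add_right, h₁, h₂]
    | single E b =>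
      induction H using Finsupp.induction_linear with
      | zero => simp
      | add H₁ H₂ h₁ h₂ =>
        rw [nilComp_add_right, nilComp_add_right, nilComp_add_right, h₁, h₂]
      | single L c => exact nilComp_single_assoc D E L a b c
end
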